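/- Let Γ be the Cayley graph of A∗B and Γ_A the embedded Cayley graph of A. If η ⊂ Γ_A is an M-Morse geodesic (with respect to the metric of Γ_A), then η, considered as a geodesic in Γ, is M′-Morse for a Morse gauge M′ depending only on M. -/

import Mathlib

open Set Monoid

/-- A Morse gauge. -/
abbrev MorseGauge := ℝ → ℝ → ℝ

/-- A list of letters from `S ∪ S⁻¹`. -/
def IsWordOver {G : Type*} [Group G] (S : Set G) (l : List G) : Prop :=
  ∀ x ∈ l, x ∈ S ∨ x⁻¹ ∈ S

/-- The word metric on `G` associated to the generating set `S`. -/
noncomputable def wordDist {G : Type*} [Group G] (S : Set G) (x y : G) : ℝ :=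
  sInf {r : ℝ | ∃ l : List G, IsWordOver S l ∧ l.prod = x⁻¹ * y ∧ r = l.length}

section Discrete

variable {G : Type*}

/-- A discrete `(L,e)`-quasi-geodesic with respect to the distance function `d`,
parametrised over a set of integers. -/
def IsQGOnD (d : G → G → ℝ) (L e : ℝ) (γ : ℤ → G) (s : Set ℤ) : Prop :=
  ∀ i ∈ s, ∀ j ∈ s,
    (1 / L) * |(i : ℝ) - (j : ℝ)| - e ≤ d (γ i) (γ j) ∧
      d (γ i) (γ j) ≤ L * |(i : ℝ) - (j : ℝ)| + e

/-- A discrete geodesic with respect to `d`. -/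
def IsGeodesicOnD (d : G → G → ℝ) (γ : ℤ → G) (s : Set ℤ) : Prop :=
  ∀ i ∈ s, ∀ j ∈ s, d (γ i) (γ j) = |(i : ℝ) - (j : ℝ)|

/-- The discrete analogue of continuity: consecutive points are at distance at most `1`. -/
def IsContinuousD (d : G → G → ℝ) (γ : ℤ → G) (s : Set ℤ) : Prop :=
  ∀ i, i ∈ s → i + 1 ∈ s → d (γ i) (γ (i + 1)) ≤ 1

/-- The (discrete) path `γ` on `s` is `M`-Morse w.r.t. `d`: every discrete
`(L,e)`-quasi-geodesic with endpoints on `γ` stays `M L e`-close to `γ`. -/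
def IsMorseOnD (d : G → G → ℝ) (M : MorseGauge) (γ : ℤ → G) (s : Set ℤ) : Prop :=
  ∀ L e, 1 ≤ L → 0 ≤ e → ∀ (η : ℤ → G) (a b : ℤ), a ≤ b →
    IsQGOnD d L e η (Icc a b) → η a ∈ γ '' s → η b ∈ γ '' s →
    ∀ i ∈ Icc a b, ∃ j ∈ s, d (η i) (γ j) ≤ M L e

end Discrete

variable {A B : Type*} [Group A] [Group B]

/-- A syllable viewed inside the free product `A ∗ B`. -/
def sylElem : A ⊕ B → Monoid.Coprod A B
  | Sum.inl a => Monoid.Coprod.inl a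
  | Sum.inr b => Monoid.Coprod.inr b

/-- A list of syllables is alternating. -/
def AltList (l : List (A ⊕ B)) : Prop := l.Chain' (fun x y => x.isLeft ≠ y.isLeft)

/-- A reduced representation: alternating list of nontrivial syllables. -/
def ReducedList (l : List (A ⊕ B)) : Prop :=
  AltList l ∧ ∀ x ∈ l, x ≠ Sum.inl (1 : A) ∧ x ≠ Sum.inr (1 : B)

/-- `u ∈ A ∗ B` has a reduced representation starting with a nontrivial `B`-syllable. -/
def startsWithB (u : Monoid.Coprod A B) : Prop :=
  ∃ (b : B) (l : List (A ⊕ B)),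
    ReducedList (Sum.inr b :: l) ∧ ((Sum.inr b :: l).map sylElem).prod = u

/-- `C_a`: elements whose reduced representation properly begins with the `A`-syllable `a`. -/
def Cset (a : A) : Set (Monoid.Coprod A B) :=
  {w | ∃ u, startsWithB u ∧ w = Monoid.Coprod.inl a * u}

open Classical in
/-- The projection `π : A ∗ B → A`: the identity on `A`, and the separating element
`a` with `w ∈ C_a` otherwise. -/
noncomputable def projA (w : Monoid.Coprod A B) : A :=
  if h : ∃ a : A, Monoid.Coprod.inl a = w then h.choose
  else if h' : ∃ a : A, w ∈ Cset a then h'.choose else 1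

/-- The generating set of the free product `A ∗ B` induced by `S_A` and `S_B`. -/
def fpGens (SA : Set A) (SB : Set B) : Set (Monoid.Coprod A B) :=
  (fun a : A => (Monoid.Coprod.inl a : Monoid.Coprod A B)) '' SA ∪
    (fun b : B => (Monoid.Coprod.inr b : Monoid.Coprod A B)) '' SB

/-! Let `depth x` be the distance from `x ∈ A ∗ B` to its gate `inl (projA x)`. The projection
`projA` is `1`-Lipschitz and changes along an edge of `Γ` only when the edge lies in `Γ_A`, so a
path between points with different projections passes through `Γ_A` and
`depth x + depth y ≤ d x y` for such points. Hence along an `(L, e)`-quasi-geodesic `γ` with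
endpoints in `Γ_A`, consecutive points deeper than `(L + e) / 2` have the same projection; the
projection is therefore constant along an excursion of `γ` away from the
`(L + e) / 2`-neighbourhood of `Γ_A`, whose endpoints are then `O(L + e)` apart, which bounds
its length and hence the depth of `γ`. So `projA ∘ γ` is a quasi-geodesic of `Γ_A` with
endpoints on `η`, it stays close to `η` because `η` is Morse, and `γ` stays close to it.

The projection is read off normal forms, obtained from the action of `A ∗ B` on reduced
words. -/

open Monoid.Coprod

section NormalForm

open scoped Classical

variable {a c : A} {x : A ⊕ B} {t l : List (A ⊕ B)}

theorem reducedList_nil : ReducedList ([] : List (A ⊕ B)) := ⟨List.isChain_nil, by simp⟩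

theorem ReducedList.tail (h : ReducedList (x :: l)) : ReducedList l :=
  ⟨h.1.tail, fun y hy => h.2 y (List.mem_cons_of_mem _ hy)⟩

theorem ReducedList.inl_ne_one (h : ReducedList (Sum.inl a :: l)) : a ≠ 1 :=
  fun ha => (h.2 _ List.mem_cons_self).1 (by rw [ha])

theorem ReducedList.reverse (h : ReducedList l) : ReducedList l.reverse :=
  ⟨List.isChain_reverse.2 (h.1.imp fun _ _ hxy => Ne.symm hxy),
    fun x hx => h.2 x (List.mem_reverse.1 hx)⟩

theorem ReducedList.map_swap (h : ReducedList l) : ReducedList (l.map Sum.swap) := by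
  refine ⟨List.isChain_map _ |>.2 (h.1.imp fun x y hxy => ?_), ?_⟩
  · cases x <;> cases y <;> simp_all
  · simp only [List.mem_map]
    rintro _ ⟨x, hx, rfl⟩
    cases x <;> simpa [and_comm] using h.2 _ hx

/-- Reduced words are stored last syllable first, so that right multiplication by a syllable
acts at the head of the list. -/
def evalRev (l : List (A ⊕ B)) : A ∗ B := (l.reverse.map sylElem).prod

theorem evalRev_nil : evalRev ([] : List (A ⊕ B)) = 1 := rfl

theorem evalRev_cons (x : A ⊕ B) (l : List (A ⊕ B)) :
    evalRev (x :: l) = evalRev l * sylElem x := by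
  simp [evalRev]

theorem evalRev_reverse (l : List (A ⊕ B)) : evalRev l.reverse = (l.map sylElem).prod := by
  simp [evalRev]

theorem sylElem_swap (x : A ⊕ B) : sylElem x.swap = swap A B (sylElem x) := by
  cases x <;> rfl

theorem evalRev_map_swap (l : List (A ⊕ B)) :
    evalRev (l.map Sum.swap) = swap A B (evalRev l) := by
  simp [evalRev, map_list_prod, List.map_reverse, Function.comp_def, sylElem_swap]

noncomputable def consA (c : A) (t : List (A ⊕ B)) : List (A ⊕ B) :=
  if c = 1 then t else Sum.inl c :: t

noncomputable def pushA (a : A) : List (A ⊕ B) → List (A ⊕ B)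
  | Sum.inl c :: t => consA (c * a) t
  | t => consA a t

def NoInlHead (t : List (A ⊕ B)) : Prop := ∀ c t', t ≠ Sum.inl c :: t'

theorem ReducedList.noInlHead (h : ReducedList (Sum.inl a :: l)) : NoInlHead l := by
  rintro c t rfl
  exact (List.isChain_cons_cons.1 h.1).1 rfl

omit [Group B] in
theorem pushA_of_noInlHead (ht : NoInlHead t) : pushA a t = consA a t := by
  rcases t with _ | ⟨c | b, t⟩
  · rfl
  · exact absurd rfl (ht c t)
  · rfl

omit [Group B] in
theorem pushA_consA (ht : NoInlHead t) : pushA a (consA c t) = consA (c * a) t := by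
  by_cases hc : c = 1
  · rw [consA, if_pos hc, pushA_of_noInlHead ht, hc, one_mul]
  · rw [consA, if_neg hc, pushA]

omit [Group B] in
theorem getLast?_consA_cons (c : A) (x : A ⊕ B) (t : List (A ⊕ B)) :
    (consA c (x :: t)).getLast? = (x :: t).getLast? := by
  by_cases hc : c = 1 <;> simp [consA, hc, List.getLast?_cons_cons]

theorem evalRev_consA : evalRev (consA c t) = evalRev t * inl c := by
  by_cases hc : c = 1 <;> simp [consA, hc, evalRev_cons, sylElem]

theorem reducedList_consA (h : ReducedList t) (ht : NoInlHead t) (c : A) :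
    ReducedList (consA c t) := by
  by_cases hc : c = 1
  · rwa [consA, if_pos hc]
  rw [consA, if_neg hc]
  refine ⟨?_, by simpa [hc] using h.2⟩
  rcases t with _ | ⟨c' | b, t⟩
  · exact List.isChain_singleton _
  · exact absurd rfl (ht c' t)
  · exact List.isChain_cons_cons.2 ⟨by simp, h.1⟩

theorem ReducedList.exists_eq_consA (h : ReducedList l) :
    ∃ c t, ReducedList t ∧ NoInlHead t ∧ l = consA c t := by
  rcases l with _ | ⟨c | b, t⟩
  · exact ⟨1, [], h, by simp [NoInlHead], by simp [consA]⟩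
  · exact ⟨c, t, h.tail, h.noInlHead, by simp [consA, h.inl_ne_one]⟩
  · exact ⟨1, _, h, by simp [NoInlHead], by simp [consA]⟩

theorem ReducedList.pushA (h : ReducedList l) (a : A) : ReducedList (pushA a l) := by
  obtain ⟨c, t, ht, ht', rfl⟩ := h.exists_eq_consA
  rw [pushA_consA ht']
  exact reducedList_consA ht ht' _

theorem pushA_pushA (h : ReducedList l) (a a' : A) :
    pushA a' (pushA a l) = pushA (a * a') l := by
  obtain ⟨c, t, -, ht', rfl⟩ := h.exists_eq_consA
  simp only [pushA_consA ht', mul_assoc]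

theorem pushA_one (h : ReducedList l) : pushA 1 l = l := by
  obtain ⟨c, t, -, ht', rfl⟩ := h.exists_eq_consA
  rw [pushA_consA ht', mul_one]

theorem evalRev_pushA (h : ReducedList l) (a : A) :
    evalRev (pushA a l) = evalRev l * inl a := by
  obtain ⟨c, t, -, ht', rfl⟩ := h.exists_eq_consA
  rw [pushA_consA ht', evalRev_consA, evalRev_consA, map_mul, mul_assoc]

theorem pushA_eq_cons (h : ReducedList (Sum.inl a :: l)) : pushA a l = Sum.inl a :: l := by
  rw [pushA_of_noInlHead h.noInlHead, consA, if_neg h.inl_ne_one]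

theorem getLast?_pushA (h : ReducedList l) (a : A) :
    (pushA a l).getLast? = l.getLast? ∨
      ∃ c, l = consA c [] ∧ pushA a l = consA (c * a) [] := by
  obtain ⟨c, t, -, ht', rfl⟩ := h.exists_eq_consA
  rw [pushA_consA ht']
  rcases t with _ | ⟨x, t⟩
  · exact Or.inr ⟨c, rfl, rfl⟩
  · exact Or.inl (by rw [getLast?_consA_cons, getLast?_consA_cons])

noncomputable def pushB (b : B) (l : List (A ⊕ B)) : List (A ⊕ B) :=
  (pushA b (l.map Sum.swap)).map Sum.swap

theorem ReducedList.pushB (h : ReducedList l) (b : B) : ReducedList (pushB b l) :=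
  (h.map_swap.pushA b).map_swap

theorem pushB_pushB (h : ReducedList l) (b b' : B) :
    pushB b' (pushB b l) = pushB (b * b') l := by
  simp only [pushB, List.map_map, Sum.swap_swap_eq, List.map_id, pushA_pushA h.map_swap]

theorem pushB_one (h : ReducedList l) : pushB 1 l = l := by
  simp [pushB, pushA_one h.map_swap]

theorem evalRev_pushB (h : ReducedList l) (b : B) :
    evalRev (pushB b l) = evalRev l * inr b := by
  rw [pushB, evalRev_map_swap, evalRev_pushA h.map_swap, map_mul, evalRev_map_swap, swap_swap,
    swap_inl]

theorem pushB_eq_cons {b : B} (h : ReducedList (Sum.inr b :: l)) :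
    pushB b l = Sum.inr b :: l := by
  simpa [pushB] using congrArg (List.map Sum.swap) (pushA_eq_cons h.map_swap)

def ReducedWord (A B : Type*) [Group A] [Group B] := {l : List (A ⊕ B) // ReducedList l}

noncomputable def pushAHom : A →* (Function.End (ReducedWord A B))ᵐᵒᵖ where
  toFun a := .op fun l => ⟨pushA a l.1, l.2.pushA a⟩
  map_one' := MulOpposite.unop_injective <| funext fun l => Subtype.ext (pushA_one l.2)
  map_mul' a a' :=
    MulOpposite.unop_injective <| funext fun l => Subtype.ext (pushA_pushA l.2 a a').symm

noncomputable def pushBHom : B →* (Function.End (ReducedWord A B))ᵐᵒᵖ where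
  toFun b := .op fun l => ⟨pushB b l.1, l.2.pushB b⟩
  map_one' := MulOpposite.unop_injective <| funext fun l => Subtype.ext (pushB_one l.2)
  map_mul' b b' :=
    MulOpposite.unop_injective <| funext fun l => Subtype.ext (pushB_pushB l.2 b b').symm

noncomputable def rightAction : A ∗ B →* (Function.End (ReducedWord A B))ᵐᵒᵖ :=
  lift pushAHom pushBHom

theorem rightAction_mul_apply (x y : A ∗ B) (l : ReducedWord A B) :
    (rightAction (x * y)).unop l = (rightAction y).unop ((rightAction x).unop l) := by
  rw [map_mul, MulOpposite.unop_mul]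
  rfl

theorem evalRev_rightAction (w : A ∗ B) (l : ReducedWord A B) :
    evalRev ((rightAction w).unop l).1 = evalRev l.1 * w := by
  induction w using Monoid.Coprod.induction_on generalizing l with
  | inl a => exact evalRev_pushA l.2 a
  | inr b => exact evalRev_pushB l.2 b
  | mul x y hx hy => rw [rightAction_mul_apply, hy, hx, mul_assoc]

noncomputable def toRevWord (w : A ∗ B) : List (A ⊕ B) :=
  ((rightAction w).unop ⟨[], reducedList_nil⟩).1

theorem reducedList_toRevWord (w : A ∗ B) : ReducedList (toRevWord w) := Subtype.prop _

theorem evalRev_toRevWord (w : A ∗ B) : evalRev (toRevWord w) = w :=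
  (evalRev_rightAction w _).trans (one_mul w)

theorem toRevWord_one : toRevWord (1 : A ∗ B) = [] := by
  rw [toRevWord, map_one]
  rfl

theorem toRevWord_mul_inl (w : A ∗ B) (a : A) :
    toRevWord (w * inl a) = pushA a (toRevWord w) :=
  congrArg Subtype.val (rightAction_mul_apply w (inl a) _)

theorem toRevWord_mul_inr (w : A ∗ B) (b : B) :
    toRevWord (w * inr b) = pushB b (toRevWord w) :=
  congrArg Subtype.val (rightAction_mul_apply w (inr b) _)

theorem toRevWord_evalRev (h : ReducedList l) : toRevWord (evalRev l) = l := by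
  induction l with
  | nil => exact toRevWord_one
  | cons x t ih =>
    rw [evalRev_cons]
    cases x with
    | inl a => rw [sylElem, toRevWord_mul_inl, ih h.tail, pushA_eq_cons h]
    | inr b => rw [sylElem, toRevWord_mul_inr, ih h.tail, pushB_eq_cons h]

theorem toRevWord_prod (h : ReducedList l) : toRevWord (l.map sylElem).prod = l.reverse := by
  rw [← evalRev_reverse, toRevWord_evalRev h.reverse]

theorem toRevWord_inl (c : A) : toRevWord (inl c : A ∗ B) = consA c [] := by
  rw [← one_mul (inl c), toRevWord_mul_inl, toRevWord_one]
  exact pushA_of_noInlHead (by simp [NoInlHead])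

end NormalForm

section Projection

variable {a : A} {w : A ∗ B} {l : List (A ⊕ B)}

/-- The first syllable of the word stored in `l`, if it lies in `A`, and `1` otherwise. -/
def leadingA (l : List (A ⊕ B)) : A := (l.getLast?.bind Sum.getLeft?).getD 1

omit [Group B] in
theorem leadingA_reverse_cons (x : A ⊕ B) (l : List (A ⊕ B)) :
    leadingA (x :: l).reverse = (x.getLeft?).getD 1 := by
  simp [leadingA]

omit [Group B] in
theorem leadingA_consA_nil (c : A) : leadingA (consA c ([] : List (A ⊕ B))) = c := by
  by_cases hc : c = 1 <;> simp [consA, leadingA, hc]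

theorem leadingA_map_swap_consA_nil (c : B) :
    leadingA ((consA c ([] : List (B ⊕ A))).map Sum.swap) = 1 := by
  by_cases hc : c = 1 <;> simp [consA, leadingA, hc]

theorem leadingA_pushA (h : ReducedList l) (hl : ∀ c, evalRev l ≠ inl c) (a : A) :
    leadingA (pushA a l) = leadingA l := by
  rcases getLast?_pushA h a with h' | ⟨c, rfl, -⟩
  · rw [leadingA, h', leadingA]
  · exact absurd (by rw [evalRev_consA, evalRev_nil, one_mul]) (hl c)

theorem leadingA_pushB (h : ReducedList l) (b : B) : leadingA (pushB b l) = leadingA l := by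
  have hl : l = (l.map Sum.swap).map Sum.swap := by simp
  rcases getLast?_pushA h.map_swap b with h' | ⟨c, hc, h'⟩
  · rw [pushB, leadingA, List.getLast?_map, h', ← List.getLast?_map, ← hl, leadingA]
  · rw [pushB, h', leadingA_map_swap_consA_nil, hl, hc, leadingA_map_swap_consA_nil]

theorem leadingA_toRevWord_of_mem_Cset (hw : w ∈ Cset a) : leadingA (toRevWord w) = a := by
  obtain ⟨_, ⟨b, l, hl, rfl⟩, rfl⟩ := hw
  by_cases ha : a = 1
  · rw [ha, map_one, one_mul, toRevWord_prod hl, leadingA_reverse_cons]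
    rfl
  · have hl' : ReducedList (Sum.inl a :: Sum.inr b :: l) :=
      ⟨List.isChain_cons_cons.2 ⟨by simp, hl.1⟩, by simpa [ha] using hl.2⟩
    change leadingA (toRevWord ((Sum.inl a :: Sum.inr b :: l).map sylElem).prod) = a
    rw [toRevWord_prod hl', leadingA_reverse_cons]
    rfl

theorem exists_inl_eq_or_mem_Cset (w : A ∗ B) : (∃ a, inl a = w) ∨ ∃ a, w ∈ Cset a := by
  obtain ⟨c, t, ht, ht', hL⟩ := (reducedList_toRevWord w).reverse.exists_eq_consA
  have hw : w = inl c * (t.map sylElem).prod := by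
    rw [← evalRev_toRevWord w, ← List.reverse_reverse (toRevWord w), evalRev_reverse, hL]
    by_cases hc : c = 1 <;> simp [consA, hc, sylElem]
  rcases t with _ | ⟨c' | b, t⟩
  · exact Or.inl ⟨c, by simp [hw]⟩
  · exact absurd rfl (ht' c' t)
  · exact Or.inr ⟨c, _, ⟨b, t, ht, rfl⟩, hw⟩

theorem projA_eq_leadingA (w : A ∗ B) : projA w = leadingA (toRevWord w) := by
  unfold projA
  split_ifs with h₁ h₂
  · conv_rhs => rw [← h₁.choose_spec, toRevWord_inl, leadingA_consA_nil]
  · exact (leadingA_toRevWord_of_mem_Cset h₂.choose_spec).symm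
  · exact ((exists_inl_eq_or_mem_Cset w).elim h₁ h₂).elim

theorem projA_inl (a : A) : projA (inl a : A ∗ B) = a := by
  rw [projA_eq_leadingA, toRevWord_inl, leadingA_consA_nil]

theorem projA_mul_inr (w : A ∗ B) (b : B) : projA (w * inr b) = projA w := by
  rw [projA_eq_leadingA, projA_eq_leadingA, toRevWord_mul_inr,
    leadingA_pushB (reducedList_toRevWord w)]

theorem projA_mul_inl (hw : ∀ c, w ≠ inl c) (a : A) : projA (w * inl a) = projA w := by
  rw [projA_eq_leadingA, projA_eq_leadingA, toRevWord_mul_inl,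
    leadingA_pushA (reducedList_toRevWord w) (by rwa [evalRev_toRevWord])]

end Projection

section WordMetric

variable {G H : Type*} [Group G] [Group H] {S : Set G} {x y : G}

theorem exists_isWordOver_prod_eq (hS : Subgroup.closure S = ⊤) (g : G) :
    ∃ l, IsWordOver S l ∧ l.prod = g := by
  have hg : g ∈ (Subgroup.closure S).toSubmonoid := by simp [hS]
  rw [Subgroup.closure_toSubmonoid] at hg
  obtain ⟨l, hl, rfl⟩ := Submonoid.exists_list_of_mem_closure hg
  exact ⟨l, fun x hx => by simpa using hl x hx, rfl⟩

theorem wordDist_le_length {l : List G} (hl : IsWordOver S l) (hp : l.prod = x⁻¹ * y) :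
    wordDist S x y ≤ l.length :=
  csInf_le ⟨0, by rintro r ⟨l', -, -, rfl⟩; positivity⟩ ⟨l, hl, hp, rfl⟩

theorem exists_length_eq_wordDist (hS : Subgroup.closure S = ⊤) (x y : G) :
    ∃ l, IsWordOver S l ∧ l.prod = x⁻¹ * y ∧ (l.length : ℝ) = wordDist S x y := by
  classical
  have hP : ∃ n, ∃ l, IsWordOver S l ∧ l.prod = x⁻¹ * y ∧ l.length = n := by
    obtain ⟨l, hl, hp⟩ := exists_isWordOver_prod_eq hS (x⁻¹ * y)
    exact ⟨_, l, hl, hp, rfl⟩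
  obtain ⟨l, hl, hp, hlen⟩ := Nat.find_spec hP
  refine ⟨l, hl, hp, le_antisymm ?_ (wordDist_le_length hl hp)⟩
  refine le_csInf ⟨_, l, hl, hp, rfl⟩ ?_
  rintro _ ⟨l', hl', hp', rfl⟩
  rw [hlen]
  exact_mod_cast Nat.find_min' hP ⟨l', hl', hp', rfl⟩

theorem wordDist_nonneg (S : Set G) (x y : G) : 0 ≤ wordDist S x y :=
  Real.sInf_nonneg (by rintro r ⟨l, -, -, rfl⟩; positivity)

theorem wordDist_self (S : Set G) (x : G) : wordDist S x x = 0 := by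
  refine le_antisymm ?_ (wordDist_nonneg S x x)
  simpa using wordDist_le_length (S := S) (x := x) (y := x) (l := []) (by simp [IsWordOver])
    (by simp)

theorem wordDist_mul_le_one {g : G} (hg : g ∈ S ∨ g⁻¹ ∈ S) (x : G) :
    wordDist S x (x * g) ≤ 1 := by
  simpa using wordDist_le_length (S := S) (l := [g]) (by simpa [IsWordOver] using hg) (by simp)

theorem le_wordDist_of_forall_letter (hS : Subgroup.closure S = ⊤) {δ : G → G → ℝ}
    (hself : ∀ x, δ x x = 0) (htri : ∀ x y z, δ x z ≤ δ x y + δ y z)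
    (hstep : ∀ x g, g ∈ S ∨ g⁻¹ ∈ S → δ x (x * g) ≤ 1) (x y : G) :
    δ x y ≤ wordDist S x y := by
  obtain ⟨l, hl, hp, hlen⟩ := exists_length_eq_wordDist hS x y
  rw [← hlen, show y = x * l.prod by rw [hp, mul_inv_cancel_left]]
  clear hp hlen
  induction l generalizing x with
  | nil => simp [hself]
  | cons g t ih =>
    rw [List.prod_cons, ← mul_assoc, List.length_cons, Nat.cast_succ, add_comm]
    exact (htri _ _ _).trans (add_le_add (hstep x g (hl g List.mem_cons_self))
      (ih _ fun y hy => hl y (List.mem_cons_of_mem _ hy)))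

theorem wordDist_triangle (hS : Subgroup.closure S = ⊤) (x y z : G) :
    wordDist S x z ≤ wordDist S x y + wordDist S y z := by
  obtain ⟨l₁, hl₁, hp₁, hlen₁⟩ := exists_length_eq_wordDist hS x y
  obtain ⟨l₂, hl₂, hp₂, hlen₂⟩ := exists_length_eq_wordDist hS y z
  rw [← hlen₁, ← hlen₂, ← Nat.cast_add, ← List.length_append]
  refine wordDist_le_length (fun g hg => ?_) (by simp [hp₁, hp₂, mul_assoc])
  rcases List.mem_append.1 hg with hg | hg
  exacts [hl₁ g hg, hl₂ g hg]

theorem wordDist_comm (hS : Subgroup.closure S = ⊤) (x y : G) :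
    wordDist S x y = wordDist S y x := by
  have key : ∀ x y : G, wordDist S x y ≤ wordDist S y x := by
    intro x y
    obtain ⟨l, hl, hp, hlen⟩ := exists_length_eq_wordDist hS y x
    rw [← hlen, ← List.length_map (f := (·⁻¹)), ← List.length_reverse]
    refine wordDist_le_length (fun g hg => ?_) ?_
    · obtain ⟨s, hs, rfl⟩ := List.mem_map.1 (List.mem_reverse.1 hg)
      simpa [or_comm] using hl s hs
    · rw [← List.prod_inv_reverse, hp, mul_inv_rev, inv_inv]
  exact le_antisymm (key x y) (key y x)

theorem wordDist_map_le (hS : Subgroup.closure S = ⊤) (f : G →* H) {T : Set H}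
    (hf : ∀ s ∈ S, f s ∈ T) (x y : G) : wordDist T (f x) (f y) ≤ wordDist S x y := by
  obtain ⟨l, hl, hp, hlen⟩ := exists_length_eq_wordDist hS x y
  rw [← hlen, ← List.length_map (f := f)]
  refine wordDist_le_length (fun g hg => ?_) (by rw [← map_list_prod, hp, map_mul, map_inv])
  obtain ⟨s, hs, rfl⟩ := List.mem_map.1 hg
  rcases hl s hs with h | h
  · exact Or.inl (hf s h)
  · exact Or.inr (by simpa using hf _ h)

end WordMetric

open Classical in
/-- The distance on a star of rays glued at their origins, `x` sitting at height `f x` on the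
ray `p x`. -/
noncomputable def gateDist {X Y : Type*} (p : X → Y) (f : X → ℝ) (x y : X) : ℝ :=
  if p x = p y then |f x - f y| else f x + f y

theorem gateDist_triangle {X Y : Type*} {p : X → Y} {f : X → ℝ} (hf : ∀ x, 0 ≤ f x)
    (x y z : X) : gateDist p f x z ≤ gateDist p f x y + gateDist p f y z := by
  have hxy : |f x - f y| ≤ f x + f y :=
    abs_sub_le_iff.2 ⟨by linarith [hf y], by linarith [hf x]⟩
  have hyz : |f y - f z| ≤ f y + f z :=
    abs_sub_le_iff.2 ⟨by linarith [hf z], by linarith [hf y]⟩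
  have h₁ := abs_sub_le (f x) (f y) (f z)
  have h₂ := le_abs_self (f x - f y)
  have h₃ := neg_abs_le (f y - f z)
  have h₄ := neg_abs_le (f x - f y)
  have h₅ := le_abs_self (f y - f z)
  unfold gateDist
  split_ifs <;> first
    | linarith [hf y]
    | simp_all

section FreeProductMetric

variable {SA : Set A} {SB : Set B} {g x y : A ∗ B}

theorem closure_fpGens (hA : Subgroup.closure SA = ⊤) (hB : Subgroup.closure SB = ⊤) :
    Subgroup.closure (fpGens SA SB) = ⊤ := by
  change Subgroup.closure ((inl : A →* A ∗ B) '' SA ∪ (inr : B →* A ∗ B) '' SB) = ⊤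
  rw [Subgroup.closure_union, ← MonoidHom.map_closure, ← MonoidHom.map_closure, hA, hB,
    ← MonoidHom.range_eq_map, ← MonoidHom.range_eq_map, range_inl_sup_range_inr]

theorem eq_inl_or_eq_inr_of_mem_fpGens (hg : g ∈ fpGens SA SB ∨ g⁻¹ ∈ fpGens SA SB) :
    (∃ s, (s ∈ SA ∨ s⁻¹ ∈ SA) ∧ g = inl s) ∨ ∃ t : B, g = inr t := by
  rcases hg with (⟨s, hs, rfl⟩ | ⟨t, -, rfl⟩) | (⟨s, hs, hg⟩ | ⟨t, -, hg⟩)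
  · exact Or.inl ⟨s, Or.inl hs, rfl⟩
  · exact Or.inr ⟨t, rfl⟩
  · exact Or.inl ⟨s⁻¹, Or.inr (by rwa [inv_inv]), by
      rw [map_inv]; exact inv_eq_iff_eq_inv.1 hg.symm⟩
  · exact Or.inr ⟨t⁻¹, by rw [map_inv]; exact inv_eq_iff_eq_inv.1 hg.symm⟩

theorem projA_mul_letter (hg : g ∈ fpGens SA SB ∨ g⁻¹ ∈ fpGens SA SB) (x : A ∗ B) :
    projA (x * g) = projA x ∨
      ∃ c s, (s ∈ SA ∨ s⁻¹ ∈ SA) ∧ x = inl c ∧ g = inl s := by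
  rcases eq_inl_or_eq_inr_of_mem_fpGens hg with ⟨s, hs, rfl⟩ | ⟨t, rfl⟩
  · by_cases hx : ∃ c, x = inl c
    · obtain ⟨c, rfl⟩ := hx
      exact Or.inr ⟨c, s, hs, rfl, rfl⟩
    · exact Or.inl (projA_mul_inl (not_exists.1 hx) s)
  · exact Or.inl (projA_mul_inr x t)

theorem wordDist_projA_le (hA : Subgroup.closure SA = ⊤) (hB : Subgroup.closure SB = ⊤)
    (x y : A ∗ B) : wordDist SA (projA x) (projA y) ≤ wordDist (fpGens SA SB) x y := by
  refine le_wordDist_of_forall_letter (closure_fpGens hA hB)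
    (δ := fun x y => wordDist SA (projA x) (projA y)) (fun _ => wordDist_self _ _)
    (fun _ _ _ => wordDist_triangle hA _ _ _) (fun x g hg => ?_) x y
  rcases projA_mul_letter hg x with h | ⟨c, s, hs, rfl, rfl⟩
  · rw [h, wordDist_self]
    exact zero_le_one
  · rw [← map_mul, projA_inl, projA_inl]
    exact wordDist_mul_le_one hs c

theorem wordDist_inl_le (hA : Subgroup.closure SA = ⊤) (a a' : A) :
    wordDist (fpGens SA SB) (inl a) (inl a') ≤ wordDist SA a a' :=
  wordDist_map_le hA (inl : A →* A ∗ B) (fun s hs => Or.inl ⟨s, hs, rfl⟩) a a'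

noncomputable def depth (SA : Set A) (SB : Set B) (x : A ∗ B) : ℝ :=
  wordDist (fpGens SA SB) x (inl (projA x))

theorem depth_nonneg (x : A ∗ B) : 0 ≤ depth SA SB x := wordDist_nonneg _ _ _

theorem depth_inl (a : A) : depth SA SB (inl a) = 0 := by
  rw [depth, projA_inl, wordDist_self]

theorem depth_mul_le (hA : Subgroup.closure SA = ⊤) (hB : Subgroup.closure SB = ⊤)
    (hg : g ∈ fpGens SA SB ∨ g⁻¹ ∈ fpGens SA SB) (x : A ∗ B) :
    depth SA SB (x * g) ≤ depth SA SB x + 1 := by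
  have hFP := closure_fpGens hA hB
  rcases projA_mul_letter hg x with h | ⟨c, s, -, rfl, rfl⟩
  · calc depth SA SB (x * g)
        ≤ wordDist (fpGens SA SB) (x * g) x + depth SA SB x := by
          rw [depth, depth, h]
          exact wordDist_triangle hFP _ _ _
      _ ≤ depth SA SB x + 1 := by
          rw [wordDist_comm hFP, add_comm]
          linarith [wordDist_mul_le_one hg x]
  · rw [← map_mul, depth_inl, depth_inl, zero_add]
    exact zero_le_one

theorem depth_le_depth_add (hA : Subgroup.closure SA = ⊤) (hB : Subgroup.closure SB = ⊤)
    (x y : A ∗ B) : depth SA SB y ≤ depth SA SB x + wordDist (fpGens SA SB) x y := by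
  have := le_wordDist_of_forall_letter (closure_fpGens hA hB)
    (δ := fun x y => depth SA SB y - depth SA SB x) (fun _ => sub_self _)
    (fun _ _ _ => by linarith) (fun x g hg => by linarith [depth_mul_le hA hB hg x]) x y
  linarith

theorem depth_add_depth_le (hA : Subgroup.closure SA = ⊤) (hB : Subgroup.closure SB = ⊤)
    (h : projA x ≠ projA y) : depth SA SB x + depth SA SB y ≤ wordDist (fpGens SA SB) x y := by
  have hFP := closure_fpGens hA hB
  have := le_wordDist_of_forall_letter hFP (δ := gateDist projA (depth SA SB))
    (fun _ => by simp [gateDist]) (gateDist_triangle depth_nonneg) (fun x g hg => ?_) x y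
  · simpa [gateDist, h] using this
  rcases projA_mul_letter hg x with h | ⟨c, s, -, rfl, rfl⟩
  · have h₁ := depth_le_depth_add hA hB x (x * g)
    have h₂ := depth_le_depth_add hA hB (x * g) x
    have h₃ := wordDist_mul_le_one hg x
    rw [wordDist_comm hFP] at h₂
    rw [gateDist, if_pos h.symm, abs_le]
    constructor <;> linarith
  · simp [gateDist, ← map_mul, depth_inl]

theorem wordDist_le_depth_add (hA : Subgroup.closure SA = ⊤) (hB : Subgroup.closure SB = ⊤)
    (x y : A ∗ B) : wordDist (fpGens SA SB) x y ≤
      depth SA SB x + wordDist SA (projA x) (projA y) + depth SA SB y := by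
  have hFP := closure_fpGens hA hB
  calc wordDist (fpGens SA SB) x y
      ≤ depth SA SB x + wordDist (fpGens SA SB) (inl (projA x)) y :=
        wordDist_triangle hFP _ _ _
    _ ≤ depth SA SB x + (wordDist (fpGens SA SB) (inl (projA x)) (inl (projA y)) +
          depth SA SB y) := by
        rw [depth, depth, wordDist_comm hFP y]
        linarith [wordDist_triangle hFP (inl (projA x)) (inl (projA y)) y]
    _ ≤ depth SA SB x + wordDist SA (projA x) (projA y) + depth SA SB y := by
        linarith [wordDist_inl_le (SB := SB) hA (projA x) (projA y)]

end FreeProductMetric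

theorem exists_excursion {P : ℤ → Prop} {a b i : ℤ} (ha : P a) (hb : P b) (hi : i ∈ Icc a b)
    (hPi : ¬P i) : ∃ p q, a ≤ p ∧ p < i ∧ i < q ∧ q ≤ b ∧ P p ∧ P q ∧
      ∀ j, p < j → j < q → ¬P j := by
  obtain ⟨p, ⟨hap, hpi, hp⟩, hpmax⟩ := Int.exists_greatest_of_bdd
    (P := fun j => a ≤ j ∧ j ≤ i ∧ P j) ⟨i, fun _ h => h.2.1⟩ ⟨a, le_rfl, hi.1, ha⟩
  obtain ⟨q, ⟨hiq, hqb, hq⟩, hqmin⟩ := Int.exists_least_of_bdd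
    (P := fun j => i ≤ j ∧ j ≤ b ∧ P j) ⟨i, fun _ h => h.1⟩ ⟨b, hi.2, le_rfl, hb⟩
  have hpi' : p < i := lt_of_le_of_ne hpi fun h => hPi (h ▸ hp)
  have hiq' : i < q := lt_of_le_of_ne hiq fun h => hPi (h ▸ hq)
  refine ⟨p, q, hap, hpi', hiq', hqb, hp, hq, fun j hpj hjq hj => ?_⟩
  rcases le_total j i with hji | hij
  · exact absurd (hpmax j ⟨by omega, hji, hj⟩) (by omega)
  · exact absurd (hqmin j ⟨hij, by omega, hj⟩) (by omega)

theorem eq_of_forall_succ_eq {α : Type*} {f : ℤ → α} {p q : ℤ} (hpq : p ≤ q)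
    (h : ∀ j, p ≤ j → j < q → f (j + 1) = f j) : f q = f p := by
  induction q, hpq using Int.leInduction with
  | base => rfl
  | succ n hpn ih => rw [h n hpn (by omega), ih fun j hj hjn => h j hj (by omega)]

theorem IsQGOnD.dist_succ_le {G : Type*} {d : G → G → ℝ} {L e : ℝ} {γ : ℤ → G}
    {s : Set ℤ} (h : IsQGOnD d L e γ s) {j : ℤ} (hj : j ∈ s) (hj' : j + 1 ∈ s) :
    d (γ j) (γ (j + 1)) ≤ L + e := by
  simpa using (h j hj (j + 1) hj').2

section MorseTransfer

variable {SA : Set A} {SB : Set B} {L e : ℝ} {γ : ℤ → A ∗ B} {s : Set ℤ} {a b : ℤ}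

theorem projA_succ_eq_of_lt_depth (hA : Subgroup.closure SA = ⊤)
    (hB : Subgroup.closure SB = ⊤) (hQG : IsQGOnD (wordDist (fpGens SA SB)) L e γ s)
    {j : ℤ} (hj : j ∈ s) (hj' : j + 1 ∈ s) (h : (L + e) / 2 < depth SA SB (γ j))
    (h' : (L + e) / 2 < depth SA SB (γ (j + 1))) : projA (γ (j + 1)) = projA (γ j) := by
  by_contra hne
  have := depth_add_depth_le hA hB (Ne.symm hne)
  linarith [hQG.dist_succ_le hj hj']

theorem excursion_length_le (hA : Subgroup.closure SA = ⊤) (hB : Subgroup.closure SB = ⊤)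
    (hL : 0 < L) (hQG : IsQGOnD (wordDist (fpGens SA SB)) L e γ (Icc a b)) {p q : ℤ}
    (hap : a ≤ p) (hpq : p + 1 < q) (hqb : q ≤ b) (hp : depth SA SB (γ p) ≤ (L + e) / 2)
    (hq : depth SA SB (γ q) ≤ (L + e) / 2)
    (hdeep : ∀ j, p < j → j < q → (L + e) / 2 < depth SA SB (γ j)) :
    (q - p : ℝ) ≤ L * (3 * L + 4 * e) := by
  have hmem : ∀ j, p ≤ j → j ≤ q → j ∈ Icc a b := fun j _ _ => ⟨by omega, by omega⟩
  have hconst : projA (γ (q - 1)) = projA (γ (p + 1)) :=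
    eq_of_forall_succ_eq (f := fun j => projA (γ j)) (by omega) fun j hj hjq =>
      projA_succ_eq_of_lt_depth hA hB hQG (hmem j (by omega) (by omega))
        (hmem (j + 1) (by omega) (by omega)) (hdeep j (by omega) (by omega))
        (hdeep (j + 1) (by omega) (by omega))
  have hfirst := (wordDist_projA_le hA hB _ _).trans
    (hQG.dist_succ_le (hmem p le_rfl (by omega)) (hmem (p + 1) (by omega) (by omega)))
  have hlast := (wordDist_projA_le hA hB _ _).trans
    (hQG.dist_succ_le (hmem (q - 1) (by omega) (by omega))
      (by simpa using hmem q (by omega) le_rfl))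
  rw [sub_add_cancel, hconst] at hlast
  have hproj := wordDist_triangle hA (projA (γ p)) (projA (γ (p + 1))) (projA (γ q))
  have hup := wordDist_le_depth_add hA hB (γ p) (γ q)
  have hlow := (hQG p (hmem p le_rfl (by omega)) q (hmem q (by omega) le_rfl)).1
  have hpq' : (p : ℝ) ≤ q := by exact_mod_cast (by omega : p ≤ q)
  rw [abs_sub_comm, abs_of_nonneg (by linarith), one_div_mul_eq_div] at hlow
  have : ((q : ℝ) - p) / L ≤ 3 * L + 4 * e := by linarith
  rwa [div_le_iff₀ hL, mul_comm] at this

/-- `(L + e) / 2` is half the maximal length of a step of an `(L, e)`-quasi-geodesic, and an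
excursion deeper than that has length at most `L * (3 * L + 4 * e)`. -/
noncomputable def depthBound (L e : ℝ) : ℝ := (L + e) / 2 + L * (L * (3 * L + 4 * e)) + e

theorem depthBound_nonneg (hL : 0 ≤ L) (he : 0 ≤ e) : 0 ≤ depthBound L e := by
  unfold depthBound
  positivity

theorem depth_le_depthBound (hA : Subgroup.closure SA = ⊤) (hB : Subgroup.closure SB = ⊤)
    (hL : 1 ≤ L) (he : 0 ≤ e) (hQG : IsQGOnD (wordDist (fpGens SA SB)) L e γ (Icc a b))
    (ha : depth SA SB (γ a) = 0) (hb : depth SA SB (γ b) = 0) {i : ℤ} (hi : i ∈ Icc a b) :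
    depth SA SB (γ i) ≤ depthBound L e := by
  have hpos : 0 ≤ L * (L * (3 * L + 4 * e)) := by positivity
  by_cases hshallow : depth SA SB (γ i) ≤ (L + e) / 2
  · unfold depthBound
    linarith
  obtain ⟨p, q, hap, hpi, hiq, hqb, hp, hq, hdeep⟩ :=
    exists_excursion (P := fun j => depth SA SB (γ j) ≤ (L + e) / 2)
      (by rw [ha]; positivity) (by rw [hb]; positivity) hi hshallow
  have hqp := excursion_length_le hA hB (by linarith) hQG hap (by omega) hqb hp hq
    fun j hpj hjq => not_le.1 (hdeep j hpj hjq)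
  have hpi' : (p : ℝ) ≤ i := by exact_mod_cast hpi.le
  have hiq' : (i : ℝ) ≤ q := by exact_mod_cast hiq.le
  have hstep := (hQG p ⟨hap, by omega⟩ i hi).2
  rw [abs_sub_comm, abs_of_nonneg (by linarith)] at hstep
  have hLi : L * (i - p) ≤ L * (L * (3 * L + 4 * e)) :=
    mul_le_mul_of_nonneg_left (by linarith) (by linarith)
  have := depth_le_depth_add hA hB (γ p) (γ i)
  unfold depthBound
  linarith

theorem isQGOnD_projA (hA : Subgroup.closure SA = ⊤) (hB : Subgroup.closure SB = ⊤) {D : ℝ}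
    (hQG : IsQGOnD (wordDist (fpGens SA SB)) L e γ s)
    (hD : ∀ i ∈ s, depth SA SB (γ i) ≤ D) :
    IsQGOnD (wordDist SA) L (e + 2 * D) (fun i => projA (γ i)) s := fun i hi j hj =>
  ⟨by linarith [(hQG i hi j hj).1, wordDist_le_depth_add hA hB (γ i) (γ j), hD i hi, hD j hj],
    by linarith [(hQG i hi j hj).2, wordDist_projA_le hA hB (γ i) (γ j), hD i hi,
      depth_nonneg (SA := SA) (SB := SB) (γ i)]⟩

end MorseTransfer

/-- if `η ⊆ Γ_A` is an `M`-Morse geodesic with respect to the metric of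
`Γ_A`, then `η`, considered as a geodesic in the Cayley graph `Γ` of `A ∗ B`, is
`M'`-Morse for a Morse gauge `M'` depending only on `M`. -/
theorem stmt8 (M : MorseGauge) :
    ∃ M' : MorseGauge,
      ∀ (A B : Type) (_ : Group A) (_ : Group B) (SA : Set A) (SB : Set B),
        SA.Finite → SB.Finite →
        Subgroup.closure SA = ⊤ → Subgroup.closure SB = ⊤ →
        ∀ (η : ℤ → A) (s : Set ℤ), s.OrdConnected →
          IsGeodesicOnD (wordDist SA) η s →
          IsMorseOnD (wordDist SA) M η s →
          IsMorseOnD (wordDist (fpGens SA SB)) M'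
            (fun i => (Monoid.Coprod.inl (η i) : Monoid.Coprod A B)) s := by
  refine ⟨fun L e => depthBound L e + M L (e + 2 * depthBound L e), ?_⟩
  intro A B _ _ SA SB _ _ hA hB η s _ _ hMorse L e hL he γ a b hab hQG ⟨a₀, ha₀, hγa⟩
    ⟨b₀, hb₀, hγb⟩ i hi
  have hdepth : ∀ j ∈ Icc a b, depth SA SB (γ j) ≤ depthBound L e := fun j hj =>
    depth_le_depthBound hA hB hL he hQG (by rw [← hγa, depth_inl])
      (by rw [← hγb, depth_inl]) hj
  have hD := depthBound_nonneg (by linarith : (0 : ℝ) ≤ L) he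
  obtain ⟨j, hj, hclose⟩ := hMorse L _ hL (by linarith)
    _ a b hab (isQGOnD_projA hA hB hQG hdepth) ⟨a₀, ha₀, by simp [← hγa, projA_inl]⟩
    ⟨b₀, hb₀, by simp [← hγb, projA_inl]⟩ i hi
  refine ⟨j, hj, (wordDist_triangle (closure_fpGens hA hB) _ (inl (projA (γ i))) _).trans ?_⟩
  exact add_le_add (hdepth i hi) ((wordDist_inl_le hA _ _).trans hclose)
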